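/- arXiv:2004.03210 — 3 statements merged into one kernel-verified Lean document; each statement's English description precedes it below -/
import Mathlib

section
/- Let α > 0, let U ⊆ ℝ^d be open, set k := ⌊α⌋ + 1, and let j ≥ k be an integer. There exists a constant c > 0 (depending only on d, α, j) such that for every bounded continuous f : U → ℝ, every r > 0, and every x ∈ U with B(x, r(k+2)) ⊆ U, one has sup_{0<|h|≤r} |Δ_h^k f(x)|/|h|^α ≤ c r^{−α} sup_{z∈U} |f(z)| + c sup_{0<|h|≤r/j} sup_{z ∈ B(x, r(k+1))} |Δ_h^j f(z)|/|h|^α. -/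
open MeasureTheory ENNReal Metric Set Filter Topology

noncomputable section

/-- Euclidean space ℝ^d. -/
abbrev Ed (d : ℕ) := EuclideanSpace ℝ (Fin d)

/-- First difference operator `Δ_h f (x) = f (x+h) - f x`. -/
def deltaOp {E : Type*} [Add E] (h : E) (f : E → ℝ) : E → ℝ := fun x => f (x + h) - f x

/-- Iterated difference operator `Δ_h^n`. -/
def iterDelta {E : Type*} [Add E] (h : E) (n : ℕ) (f : E → ℝ) : E → ℝ := (deltaOp h)^[n] f

/-!
Marchaud's argument. Since `Δ_{2g} = Δ_g² + 2 Δ_g`, the binomial theorem gives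
`2^m Δ_g^m f = Δ_{2g}^m f - ∑_{i=1}^m C(m,i) 2^(m-i) Δ_g^(m+i) f`, and each `Δ_g^(m+i) f` is a
difference of `Δ_g^(m+1) f`. Iterating along the dyadic dilates `2^l g` up to the scale `r/j²`
bounds `|Δ_g^m f|` by `2^(-mL) 2^m sup |f|` plus a geometric series in `2^(α-m)`, which converges
because `m > α`; so a bound `C |g|^α` passes from order `m + 1` down to order `m`. Descending from
`j` to `k = ⌊α⌋ + 1` gives the estimate for `|h| ≤ r/j²`, and for `r/j² < |h| ≤ r` the trivial
bound `|Δ_h^k f(x)| ≤ 2^k sup |f|` suffices.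
-/

open Finset

lemma le_pow_mul_add_sum_of_le_mul_succ_add {a e : ℕ → ℝ} {θ : ℝ} (hθ : 0 ≤ θ) {L : ℕ}
    (h : ∀ l < L, a l ≤ θ * a (l + 1) + e l) :
    a 0 ≤ θ ^ L * a L + ∑ l ∈ range L, θ ^ l * e l := by
  induction L with
  | zero => simp
  | succ L ih =>
    calc a 0 ≤ θ ^ L * a L + ∑ l ∈ range L, θ ^ l * e l := ih fun l hl ↦ h l (by omega)
      _ ≤ θ ^ L * (θ * a (L + 1) + e L) + ∑ l ∈ range L, θ ^ l * e l := by
        gcongr; exact h L (by omega)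
      _ = _ := by rw [sum_range_succ]; ring

section Algebra

variable {E : Type*}

def deltaLin [Add E] (h : E) : Module.End ℝ (E → ℝ) where
  toFun := deltaOp h
  map_add' f g := by ext x; simp only [deltaOp, Pi.add_apply]; ring
  map_smul' c f := by ext x; simp only [deltaOp, Pi.smul_apply, smul_eq_mul, RingHom.id_apply]; ring

lemma iterDelta_eq_pow [Add E] (h : E) (n : ℕ) (f : E → ℝ) :
    iterDelta h n f = (deltaLin h ^ n) f := by
  rw [Module.End.pow_apply]; rfl

lemma iterDelta_succ_apply [Add E] (h : E) (n : ℕ) (f : E → ℝ) (z : E) :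
    iterDelta h (n + 1) f z = iterDelta h n f (z + h) - iterDelta h n f z := by
  rw [iterDelta, Function.iterate_succ_apply']
  rfl

lemma iterDelta_add [Add E] (h : E) (a b : ℕ) (f : E → ℝ) :
    iterDelta h (a + b) f = iterDelta h a (iterDelta h b f) :=
  Function.iterate_add_apply _ a b f

lemma abs_iterDelta_le [AddMonoid E] (h : E) (n : ℕ) (f : E → ℝ) {z : E} {A : ℝ}
    (hf : ∀ i ≤ n, |f (z + i • h)| ≤ A) : |iterDelta h n f z| ≤ 2 ^ n * A := by
  induction n generalizing z with
  | zero => simpa [iterDelta] using hf 0 le_rfl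
  | succ n ih =>
    have h₁ : |iterDelta h n f (z + h)| ≤ 2 ^ n * A :=
      ih fun i hi ↦ by simpa [add_assoc, succ_nsmul'] using hf (i + 1) (by omega)
    have h₂ : |iterDelta h n f z| ≤ 2 ^ n * A := ih fun i hi ↦ hf i (by omega)
    rw [iterDelta_succ_apply, pow_succ]
    linarith [abs_sub (iterDelta h n f (z + h)) (iterDelta h n f z)]

lemma deltaLin_add_self [AddSemigroup E] (h : E) :
    deltaLin (h + h) = deltaLin h ^ 2 + (2 : ℝ) • deltaLin h := by
  ext f x
  simp only [deltaLin, deltaOp, sq, Module.End.mul_apply, LinearMap.add_apply,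
    LinearMap.smul_apply, LinearMap.coe_mk, AddHom.coe_mk, Pi.add_apply, Pi.smul_apply,
    smul_eq_mul, add_assoc]
  ring

lemma iterDelta_add_self_apply [AddSemigroup E] (h : E) (m : ℕ) (f : E → ℝ) (z : E) :
    iterDelta (h + h) m f z =
      ∑ i ∈ range (m + 1), (m.choose i * 2 ^ (m - i) : ℝ) * iterDelta h (m + i) f z := by
  have hc : Commute (deltaLin h ^ 2) ((2 : ℝ) • deltaLin h) :=
    ((Commute.refl _).pow_left 2).smul_right 2
  rw [iterDelta_eq_pow, deltaLin_add_self, hc.add_pow, LinearMap.sum_apply, Finset.sum_apply]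
  refine Finset.sum_congr rfl fun i hi ↦ ?_
  have hi : i ≤ m := Nat.lt_succ_iff.mp (Finset.mem_range.mp hi)
  rw [iterDelta_eq_pow, smul_pow, ← pow_mul, mul_smul_comm, ← pow_add,
    show 2 * i + (m - i) = m + i by omega]
  simp only [Module.End.mul_apply, Module.End.natCast_apply, map_nsmul, LinearMap.smul_apply,
    Pi.smul_apply, smul_eq_mul]
  rw [nsmul_eq_mul]
  ring

lemma two_pow_mul_abs_iterDelta_le [AddMonoid E] {g : E} {m : ℕ} {f : E → ℝ} {z : E} {A : ℝ}
    (hA : ∀ t < m, |iterDelta g (m + 1) f (z + t • g)| ≤ A) :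
    2 ^ m * |iterDelta g m f z| ≤ |iterDelta (g + g) m f z| + m * 8 ^ m * A := by
  have hsplit : iterDelta (g + g) m f z - 2 ^ m * iterDelta g m f z =
      ∑ i ∈ range m,
        (m.choose (i + 1) * 2 ^ (m - (i + 1)) : ℝ) * iterDelta g (m + (i + 1)) f z := by
    rw [iterDelta_add_self_apply, sum_range_succ']
    simp
  have hterm : ∀ i ∈ range m,
      |(m.choose (i + 1) * 2 ^ (m - (i + 1)) : ℝ) * iterDelta g (m + (i + 1)) f z| ≤ 8 ^ m * A := by
    intro i hi
    have hi : i < m := mem_range.mp hi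
    have hA₀ : 0 ≤ A := (abs_nonneg _).trans (hA 0 (by omega))
    have hΔ : |iterDelta g (m + (i + 1)) f z| ≤ 2 ^ i * A := by
      rw [show m + (i + 1) = i + (m + 1) by omega, iterDelta_add]
      exact abs_iterDelta_le _ _ _ fun t ht ↦ hA t (by omega)
    have hC : (m.choose (i + 1) : ℝ) ≤ 2 ^ m := mod_cast Nat.choose_le_two_pow m (i + 1)
    calc |(m.choose (i + 1) * 2 ^ (m - (i + 1)) : ℝ) * iterDelta g (m + (i + 1)) f z|
        ≤ 2 ^ m * 2 ^ m * (2 ^ m * A) := by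
          rw [abs_mul, abs_of_nonneg (by positivity)]
          gcongr
          · exact one_le_two
          · omega
          · exact hΔ.trans (by gcongr; exact one_le_two)
      _ = 8 ^ m * A := by rw [show (8 : ℝ) = 2 * 2 * 2 by norm_num, mul_pow, mul_pow]; ring
  calc 2 ^ m * |iterDelta g m f z|
      = |iterDelta (g + g) m f z - (iterDelta (g + g) m f z - 2 ^ m * iterDelta g m f z)| := by
        rw [_root_.sub_sub_cancel, abs_mul, abs_pow, abs_two]
    _ ≤ |iterDelta (g + g) m f z| + ∑ i ∈ range m,
          |(m.choose (i + 1) * 2 ^ (m - (i + 1)) : ℝ) * iterDelta g (m + (i + 1)) f z| := by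
        rw [hsplit]
        exact (abs_sub _ _).trans (by gcongr; exact abs_sum_le_sum_abs _ _)
    _ ≤ |iterDelta (g + g) m f z| + m * 8 ^ m * A := by
        grw [sum_le_sum hterm]
        simp [mul_assoc]

lemma abs_iterDelta_le_of_dyadic [AddMonoid E] {g : E} {m L : ℕ} {f : E → ℝ} {z : E} {α B : ℝ}
    (hαm : α < m) (hB : 0 ≤ B)
    (h : ∀ l < L, ∀ t < m,
      |iterDelta (2 ^ l • g) (m + 1) f (z + t • 2 ^ l • g)| ≤ B * (2 ^ α) ^ l) :
    |iterDelta g m f z| ≤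
      ((2 : ℝ) ^ m)⁻¹ ^ L * |iterDelta (2 ^ L • g) m f z|
        + m * 8 ^ m * B / (1 - 2 ^ α / 2 ^ m) := by
  set θ : ℝ := (2 ^ m)⁻¹ with hθ
  set C : ℝ := m * 8 ^ m * B
  have hθ₁ : θ ≤ 1 := inv_le_one_of_one_le₀ (one_le_pow₀ one_le_two)
  have hstep : ∀ l < L, |iterDelta (2 ^ l • g) m f z| ≤
      θ * |iterDelta (2 ^ (l + 1) • g) m f z| + C * (2 ^ α) ^ l := by
    intro l hl
    have h₂ := two_pow_mul_abs_iterDelta_le (h l hl)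
    rw [← add_nsmul, ← two_mul, ← pow_succ'] at h₂
    calc |iterDelta (2 ^ l • g) m f z| = θ * (2 ^ m * |iterDelta (2 ^ l • g) m f z|) := by
          rw [hθ, inv_mul_cancel_left₀ (by positivity)]
      _ ≤ θ * (|iterDelta (2 ^ (l + 1) • g) m f z| + m * 8 ^ m * (B * (2 ^ α) ^ l)) := by gcongr
      _ ≤ θ * |iterDelta (2 ^ (l + 1) • g) m f z| + C * (2 ^ α) ^ l := by
          linarith [mul_le_of_le_one_left (by positivity : 0 ≤ C * (2 ^ α) ^ l) hθ₁]
  have hq : 2 ^ α / 2 ^ m < (1 : ℝ) := by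
    rw [div_lt_one (by positivity), ← Real.rpow_natCast]
    exact Real.rpow_lt_rpow_of_exponent_lt one_lt_two hαm
  have hgeom : ∑ l ∈ range L, θ ^ l * (C * (2 ^ α) ^ l) ≤ C / (1 - 2 ^ α / 2 ^ m) := by
    have h (l : ℕ) : θ ^ l * (C * (2 ^ α) ^ l) = C * (2 ^ α / 2 ^ m) ^ l := by
      rw [div_eq_inv_mul, mul_pow]; ring
    simp_rw [h, ← mul_sum, range_eq_Ico]
    calc C * ∑ l ∈ Ico 0 L, (2 ^ α / 2 ^ m : ℝ) ^ l
        ≤ C * ((2 ^ α / 2 ^ m) ^ 0 / (1 - 2 ^ α / 2 ^ m)) := by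
          gcongr; exact geom_sum_Ico_le_of_lt_one (by positivity) hq
      _ = C / (1 - 2 ^ α / 2 ^ m) := by ring
  calc |iterDelta g m f z| = |iterDelta (2 ^ 0 • g) m f z| := by rw [pow_zero, one_nsmul]
    _ ≤ θ ^ L * |iterDelta (2 ^ L • g) m f z| + ∑ l ∈ range L, θ ^ l * (C * (2 ^ α) ^ l) :=
        le_pow_mul_add_sum_of_le_mul_succ_add (a := fun l ↦ |iterDelta (2 ^ l • g) m f z|)
          (e := fun l ↦ C * (2 ^ α) ^ l) (by positivity) hstep
    _ ≤ _ := by gcongr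

end Algebra

lemma inv_two_pow_pow_le_rpow {α ε ρ : ℝ} {m L : ℕ} (hα : 0 ≤ α) (hαm : α ≤ m) (hρ : 0 < ρ)
    (h : ρ < 2 ^ (L + 1) * ε) : ((2 : ℝ) ^ m)⁻¹ ^ L ≤ (2 / ρ) ^ α * ε ^ α := by
  have hL : ((2 : ℝ) ^ L)⁻¹ ≤ 2 / ρ * ε := by
    rw [inv_le_iff_one_le_mul₀' (by positivity),
      show (2 : ℝ) ^ L * (2 / ρ * ε) = 2 ^ (L + 1) * ε / ρ by ring, one_le_div hρ]
    exact h.le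
  calc ((2 : ℝ) ^ m)⁻¹ ^ L = ((2 : ℝ) ^ L)⁻¹ ^ (m : ℝ) := by
        rw [Real.rpow_natCast, ← inv_pow, ← inv_pow, ← pow_mul, ← pow_mul, mul_comm]
    _ ≤ ((2 : ℝ) ^ L)⁻¹ ^ α :=
        Real.rpow_le_rpow_of_exponent_ge (by positivity)
          (inv_le_one_of_one_le₀ (one_le_pow₀ one_le_two)) hαm
    _ ≤ (2 / ρ * ε) ^ α := Real.rpow_le_rpow (by positivity) hL hα
    _ = (2 / ρ) ^ α * ε ^ α :=
        Real.mul_rpow (by positivity) (pos_of_mul_pos_right (hρ.trans h) (by positivity)).le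

section Marchaud

variable {E : Type*} [NormedAddCommGroup E] [NormedSpace ℝ E]

lemma abs_iterDelta_le_of_abs_iterDelta_succ_le {f : E → ℝ} {x : E} {α ρ s M B : ℝ} {m : ℕ}
    (hα : 0 ≤ α) (hαm : α < m) (hρ : 0 < ρ)
    (hf : ∀ y ∈ closedBall x (s + m * ρ), |f y| ≤ M)
    (hΔ : ∀ y ∈ closedBall x (s + m * ρ), ∀ g : E, 0 < ‖g‖ → ‖g‖ ≤ ρ →
      |iterDelta g (m + 1) f y| ≤ B * ‖g‖ ^ α)
    {z : E} (hz : z ∈ closedBall x s) {g : E} (hg : 0 < ‖g‖) (hgρ : ‖g‖ ≤ ρ) :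
    |iterDelta g m f z| ≤
      (2 ^ m * (2 / ρ) ^ α * M + m * 8 ^ m * B / (1 - 2 ^ α / 2 ^ m)) * ‖g‖ ^ α := by
  have hs : 0 ≤ s := dist_nonneg.trans (mem_closedBall.mp hz)
  have hmem : ∀ g' : E, ‖g'‖ ≤ ρ → ∀ t ≤ m, z + t • g' ∈ closedBall x (s + m * ρ) := by
    intro g' hg' t ht
    rw [mem_closedBall] at hz ⊢
    calc dist (z + t • g') x ≤ dist (z + t • g') z + dist z x := dist_triangle _ _ _
      _ ≤ t * ‖g'‖ + s := by rw [dist_self_add_left]; exact add_le_add norm_nsmul_le hz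
      _ ≤ m * ρ + s := by gcongr
      _ = s + m * ρ := add_comm _ _
  have hx : x ∈ closedBall x (s + m * ρ) := mem_closedBall_self (by positivity)
  have hM : 0 ≤ M := (abs_nonneg _).trans (hf x hx)
  have hB : 0 ≤ B :=
    nonneg_of_mul_nonneg_left ((abs_nonneg _).trans (hΔ x hx g hg hgρ)) (by positivity)
  obtain ⟨L, hL, hL'⟩ := exists_nat_pow_near ((one_le_div hg).mpr hgρ) one_lt_two
  rw [le_div_iff₀ hg] at hL
  rw [div_lt_iff₀ hg] at hL'
  have hnorm (l : ℕ) : ‖2 ^ l • g‖ = 2 ^ l * ‖g‖ := by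
    rw [RCLike.norm_nsmul ℝ, nsmul_eq_mul]; push_cast; rfl
  have hnormρ (l : ℕ) (hl : l ≤ L) : ‖2 ^ l • g‖ ≤ ρ :=
    (hnorm l).trans_le <| (mul_le_mul_of_nonneg_right (pow_le_pow_right₀ one_le_two hl)
      (norm_nonneg g)).trans hL
  have hdyadic := abs_iterDelta_le_of_dyadic (B := B * ‖g‖ ^ α) hαm (by positivity)
    fun l hl t ht ↦ by
      have h := hΔ _ (hmem _ (hnormρ l hl.le) t ht.le) _ (by rw [hnorm]; positivity)
        (hnormρ l hl.le)
      rwa [hnorm, Real.mul_rpow (by positivity) hg.le, ← Real.rpow_natCast_mul two_pos.le,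
        mul_comm (l : ℝ), Real.rpow_mul_natCast two_pos.le, ← mul_assoc, mul_right_comm B] at h
  have htop : |iterDelta (2 ^ L • g) m f z| ≤ 2 ^ m * M :=
    abs_iterDelta_le _ _ _ fun t ht ↦ hf _ (hmem _ (hnormρ L le_rfl) t ht)
  calc |iterDelta g m f z|
      ≤ ((2 : ℝ) ^ m)⁻¹ ^ L * |iterDelta (2 ^ L • g) m f z|
        + m * 8 ^ m * (B * ‖g‖ ^ α) / (1 - 2 ^ α / 2 ^ m) := hdyadic
    _ ≤ (2 / ρ) ^ α * ‖g‖ ^ α * (2 ^ m * M) + m * 8 ^ m * (B * ‖g‖ ^ α) / (1 - 2 ^ α / 2 ^ m) := by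
        gcongr; exact inv_two_pow_pow_le_rpow hα hαm.le hρ hL'
    _ = _ := by ring

-- Order `m` is controlled on the ball of radius `m r / j`: the radius shrinks by `r / j` per order,
-- which pays for the displacement `m r / j²` of one Marchaud step.
lemma exists_abs_iterDelta_le_of_abs_iterDelta_le {α : ℝ} (hα : 0 ≤ α) {j m : ℕ}
    (hαm : α < m) (hmj : m ≤ j) :
    ∃ c : ℝ, ∀ (f : E → ℝ) (x : E) (r M b : ℝ), 0 < r →
      0 ≤ b → (∀ y ∈ closedBall x r, |f y| ≤ M) →
      (∀ y ∈ closedBall x r, ∀ g : E, 0 < ‖g‖ → ‖g‖ ≤ r / j →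
        |iterDelta g j f y| ≤ b * ‖g‖ ^ α) →
      ∀ y ∈ closedBall x (m * (r / j)), ∀ g : E, 0 < ‖g‖ → ‖g‖ ≤ r / j ^ 2 →
        |iterDelta g m f y| ≤ c * (M * r ^ (-α) + b) * ‖g‖ ^ α := by
  have hj : (1 : ℝ) ≤ j := by
    have : (0 : ℝ) < j := hα.trans_lt (hαm.trans_le (mod_cast hmj))
    exact_mod_cast this
  revert hαm
  have hρ : ∀ r : ℝ, 0 < r → r / j ^ 2 ≤ r / j := fun r hr ↦
    div_le_div_of_nonneg_left hr.le (by positivity) (le_self_pow₀ hj two_ne_zero)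
  induction hmj using Nat.decreasingInduction with
  | self =>
    intro _
    refine ⟨1, fun f x r M b hr _ hf hΔ y hy g hg hgρ ↦ ?_⟩
    have hM : 0 ≤ M := (abs_nonneg _).trans (hf x (mem_closedBall_self hr.le))
    rw [mul_div_cancel₀ _ (by positivity)] at hy
    calc |iterDelta g j f y| ≤ b * ‖g‖ ^ α := hΔ y hy g hg ((hρ r hr).trans' hgρ)
      _ ≤ 1 * (M * r ^ (-α) + b) * ‖g‖ ^ α := by
        gcongr; linarith [mul_nonneg hM (Real.rpow_nonneg hr.le (-α))]
  | of_succ k hkj ih =>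
    intro hαk
    obtain ⟨c', hc'⟩ := ih (hαk.trans (by push_cast; linarith))
    refine ⟨2 ^ k * (2 * j ^ 2) ^ α + k * 8 ^ k * c' / (1 - 2 ^ α / 2 ^ k),
      fun f x r M b hr hb hf hΔ y hy g hg hgρ ↦ ?_⟩
    have hkj' : (k : ℝ) + 1 ≤ j := by exact_mod_cast hkj
    have hrad : k * (r / j) + k * (r / j ^ 2) ≤ ((k + 1 : ℕ) : ℝ) * (r / j) := by
      have : (k : ℝ) * (r / j ^ 2) ≤ r / j := by
        rw [show (k : ℝ) * (r / j ^ 2) = k / j * (r / j) by ring]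
        exact mul_le_of_le_one_left (by positivity) ((div_le_one (by positivity)).mpr (by linarith))
      push_cast
      linarith
    have hrad' : ((k + 1 : ℕ) : ℝ) * (r / j) ≤ r := by
      rw [mul_div_assoc', div_le_iff₀ (by positivity)]
      push_cast
      nlinarith
    set K := M * r ^ (-α) + b
    have hbound := abs_iterDelta_le_of_abs_iterDelta_succ_le (B := c' * K) hα hαk
      (by positivity : 0 < r / j ^ 2)
      (fun y hy ↦ hf y (closedBall_subset_closedBall (hrad.trans hrad') hy))
      (fun y hy g hg hgρ ↦
        hc' f x r M b hr hb hf hΔ y (closedBall_subset_closedBall hrad hy) g hg hgρ)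
      hy hg hgρ
    have h2ρ : (2 / (r / j ^ 2)) ^ α = (2 * j ^ 2) ^ α * r ^ (-α) := by
      rw [div_div_eq_mul_div, div_eq_mul_inv, Real.mul_rpow (by positivity) (by positivity),
        Real.inv_rpow hr.le, Real.rpow_neg hr.le]
    refine hbound.trans (mul_le_mul_of_nonneg_right ?_ (by positivity))
    rw [h2ρ, add_mul]
    apply add_le_add _ (le_of_eq (by ring))
    calc 2 ^ k * ((2 * j ^ 2) ^ α * r ^ (-α)) * M
        = 2 ^ k * (2 * j ^ 2) ^ α * (M * r ^ (-α)) := by ring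
      _ ≤ 2 ^ k * (2 * j ^ 2) ^ α * K := by gcongr; exact le_add_of_nonneg_right hb

lemma exists_abs_iterDelta_le {α : ℝ} (hα : 0 ≤ α) {k j : ℕ} (hαk : α < k) (hkj : k ≤ j) :
    ∃ c : ℝ, 0 < c ∧ ∀ (f : E → ℝ) (x : E) (r M b : ℝ), 0 < r →
      0 ≤ b → (∀ y ∈ closedBall x (k * r), |f y| ≤ M) →
      (∀ y ∈ closedBall x r, ∀ g : E, 0 < ‖g‖ → ‖g‖ ≤ r / j →
        |iterDelta g j f y| ≤ b * ‖g‖ ^ α) →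
      ∀ h : E, 0 < ‖h‖ → ‖h‖ ≤ r → |iterDelta h k f x| ≤ c * (M * r ^ (-α) + b) * ‖h‖ ^ α := by
  obtain ⟨c₀, hc₀⟩ := exists_abs_iterDelta_le_of_abs_iterDelta_le (E := E) hα hαk hkj
  have hk : (1 : ℝ) ≤ k := by
    have : (0 : ℝ) < k := hα.trans_lt hαk
    exact_mod_cast this
  have hj : (1 : ℝ) ≤ j := hk.trans (mod_cast hkj)
  refine ⟨max c₀ (2 ^ k * (j ^ 2) ^ α), lt_max_of_lt_right (by positivity), ?_⟩
  intro f x r M b hr hb hf hΔ h hh hhr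
  have hM : 0 ≤ M := (abs_nonneg _).trans (hf x (mem_closedBall_self (by positivity)))
  rcases le_or_gt ‖h‖ (r / j ^ 2) with hsmall | hlarge
  · have hx : x ∈ closedBall x (k * (r / j)) := mem_closedBall_self (by positivity)
    have hf' : ∀ y ∈ closedBall x r, |f y| ≤ M := fun y hy ↦
      hf y (closedBall_subset_closedBall (le_mul_of_one_le_left hr.le hk) hy)
    grw [hc₀ f x r M b hr hb hf' hΔ x hx h hh hsmall, ← le_max_left]
  · have hsum : |iterDelta h k f x| ≤ 2 ^ k * M := by
      refine abs_iterDelta_le _ _ _ fun i hi ↦ hf _ ?_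
      rw [mem_closedBall, dist_self_add_left]
      exact norm_nsmul_le.trans (mul_le_mul (mod_cast hi) hhr (norm_nonneg _) (by positivity))
    have hone : 1 ≤ (j ^ 2) ^ α * r ^ (-α) * ‖h‖ ^ α := by
      rw [Real.rpow_neg hr.le, ← Real.inv_rpow hr.le,
        ← Real.mul_rpow (by positivity) (by positivity), ← Real.mul_rpow (by positivity) hh.le]
      refine Real.one_le_rpow ?_ hα
      rw [div_lt_iff₀ (by positivity)] at hlarge
      rw [mul_comm, ← mul_assoc, ← div_eq_mul_inv, le_div_iff₀ hr]
      linarith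
    calc |iterDelta h k f x| ≤ 2 ^ k * M * ((j ^ 2) ^ α * r ^ (-α) * ‖h‖ ^ α) :=
          hsum.trans (le_mul_of_one_le_right ((abs_nonneg _).trans hsum) hone)
      _ = 2 ^ k * (j ^ 2) ^ α * (M * r ^ (-α)) * ‖h‖ ^ α := by ring
      _ ≤ max c₀ (2 ^ k * (j ^ 2) ^ α) * (M * r ^ (-α) + b) * ‖h‖ ^ α := by
          gcongr ?_ * ?_ * _
          · exact le_max_right _ _
          · exact le_add_of_nonneg_right hb

end Marchaud

lemma ofReal_le_ofReal_mul_add_ofReal_mul {a p q : ℝ} {S T : ℝ≥0∞} (hS : S ≠ ⊤) (hT : T ≠ ⊤)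
    (hp : 0 ≤ p) (hq : 0 ≤ q) (h : a ≤ p * S.toReal + q * T.toReal) :
    ENNReal.ofReal a ≤ ENNReal.ofReal p * S + ENNReal.ofReal q * T := by
  calc ENNReal.ofReal a ≤ ENNReal.ofReal (p * S.toReal + q * T.toReal) := ofReal_le_ofReal h
    _ ≤ ENNReal.ofReal (p * S.toReal) + ENNReal.ofReal (q * T.toReal) := ofReal_add_le
    _ = ENNReal.ofReal p * S + ENNReal.ofReal q * T := by
      rw [ofReal_mul hp, ofReal_mul hq, ofReal_toReal hS, ofReal_toReal hT]

theorem iterDelta_order_comparison_general {d : ℕ} (α : ℝ) (hα : 0 < α)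
    (j : ℕ) (hj : ⌊α⌋₊ + 1 ≤ j) :
    ∃ c : ℝ, 0 < c ∧ ∀ (U : Set (Ed d)), IsOpen U →
      ∀ f : Ed d → ℝ, ContinuousOn f U → (∃ M, ∀ z ∈ U, |f z| ≤ M) →
      ∀ r : ℝ, 0 < r → ∀ x ∈ U, Metric.ball x (r * ((⌊α⌋₊ + 1 : ℕ) + 2)) ⊆ U →
        (⨆ (h : Ed d) (_ : 0 < ‖h‖) (_ : ‖h‖ ≤ r),
            ENNReal.ofReal (|iterDelta h (⌊α⌋₊ + 1) f x| / ‖h‖ ^ α)) ≤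
          ENNReal.ofReal (c * r ^ (-α)) * (⨆ z ∈ U, ENNReal.ofReal |f z|) +
            ENNReal.ofReal c *
              ⨆ (h : Ed d) (_ : 0 < ‖h‖) (_ : ‖h‖ ≤ r / j)
                (z ∈ Metric.ball x (r * ((⌊α⌋₊ + 1 : ℕ) + 1))),
                ENNReal.ofReal (|iterDelta h j f z| / ‖h‖ ^ α) := by
  set k := ⌊α⌋₊ + 1
  obtain ⟨c, hc, hbound⟩ := exists_abs_iterDelta_le (E := Ed d) hα.le
    (by simpa [k] using Nat.lt_floor_add_one α) hj
  refine ⟨c, hc, fun U _ f _ ⟨M, hM⟩ r hr x _ hball ↦ ?_⟩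
  have hk : (1 : ℝ) ≤ k := by simp [k]
  set S := ⨆ z ∈ U, ENNReal.ofReal |f z|
  set T := ⨆ (h : Ed d) (_ : 0 < ‖h‖) (_ : ‖h‖ ≤ r / j) (z ∈ ball x (r * (k + 1))),
    ENNReal.ofReal (|iterDelta h j f z| / ‖h‖ ^ α)
  rcases eq_or_ne T ⊤ with hT | hT
  · simp [hT, hc]
  have hS : S ≠ ⊤ :=
    ne_top_of_le_ne_top ofReal_ne_top (iSup₂_le fun z hz ↦ ofReal_le_ofReal (hM z hz))
  have hfS : ∀ y ∈ closedBall x (k * r), |f y| ≤ S.toReal := fun y hy ↦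
    (ofReal_le_iff_le_toReal hS).mp <| le_iSup₂_of_le y (hball <| closedBall_subset_ball
      (by rw [mul_comm]; gcongr; linarith) hy) le_rfl
  have hΔT : ∀ y ∈ closedBall x r, ∀ g : Ed d, 0 < ‖g‖ → ‖g‖ ≤ r / j →
      |iterDelta g j f y| ≤ T.toReal * ‖g‖ ^ α := fun y hy g hg hgr ↦ by
    rw [← div_le_iff₀ (by positivity), ← ofReal_le_iff_le_toReal hT]
    exact le_iSup_of_le g <| le_iSup_of_le hg <| le_iSup_of_le hgr <| le_iSup₂_of_le y
      (closedBall_subset_ball (by nlinarith) hy) le_rfl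
  refine iSup_le fun h ↦ iSup_le fun hh ↦ iSup_le fun hhr ↦ ?_
  have := hbound f x r _ _ hr toReal_nonneg hfS hΔT h hh hhr
  refine ofReal_le_ofReal_mul_add_ofReal_mul hS hT (by positivity) hc.le ?_
  rw [div_le_iff₀ (by positivity)]
  linarith

/-- Lemma A.1(i): comparison of iterated differences of different orders,
`sup_{0<|h|≤r} |Δ_h^k f(x)|/|h|^α ≤ c r^{-α} ‖f‖_{∞,U}
  + c sup_{0<|h|≤r/j} sup_{z ∈ B(x,r(k+1))} |Δ_h^j f(z)|/|h|^α`
for `k = ⌊α⌋+1 ≤ j`, `x ∈ U` with `B(x, r(k+2)) ⊆ U`, where `c` depends only on `d`, `α`, `j`. -/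
theorem iterDelta_order_comparison {d : ℕ} (hd : 1 ≤ d) (α : ℝ) (hα : 0 < α)
    (j : ℕ) (hj : ⌊α⌋₊ + 1 ≤ j) :
    ∃ c : ℝ, 0 < c ∧ ∀ (U : Set (Ed d)), IsOpen U →
      ∀ f : Ed d → ℝ, ContinuousOn f U → (∃ M, ∀ z ∈ U, |f z| ≤ M) →
      ∀ r : ℝ, 0 < r → ∀ x ∈ U, Metric.ball x (r * ((⌊α⌋₊ + 1 : ℕ) + 2)) ⊆ U →
        (⨆ (h : Ed d) (_ : 0 < ‖h‖) (_ : ‖h‖ ≤ r),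
            ENNReal.ofReal (|iterDelta h (⌊α⌋₊ + 1) f x| / ‖h‖ ^ α)) ≤
          ENNReal.ofReal (c * r ^ (-α)) * (⨆ z ∈ U, ENNReal.ofReal |f z|) +
            ENNReal.ofReal c *
              ⨆ (h : Ed d) (_ : 0 < ‖h‖) (_ : ‖h‖ ≤ r / j)
                (z ∈ Metric.ball x (r * ((⌊α⌋₊ + 1 : ℕ) + 1))),
                ENNReal.ofReal (|iterDelta h j f z| / ‖h‖ ^ α) :=
  iterDelta_order_comparison_general α hα j hj

end
end

section
/- Let α ∈ (1,2). There exists a constant C > 0 (depending only on α) such that for every bounded, twice continuously differentiable function g : (−3,3) → ℝ one has |g′(0)| ≤ C sup_{s ∈ (−3,3)} |g(s)| + C sup_{0<|t|≤1/2} sup_{|y|≤2} |Δ_t^2 g(y)|/|t|^α. -/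
open MeasureTheory ENNReal Metric Set Filter Topology

noncomputable section

/-! The dyadic difference quotients `Dₙ = 2ⁿ (g (x + 2⁻ⁿ) - g x)` satisfy
`Dₙ - Dₙ₊₁ = Δ_t² g (x) / (2t)` with `t = 2⁻⁽ⁿ⁺¹⁾`, which the Hölder bound on second differences
makes at most `S t^(α-1) / 2`. For `α > 1` these increments decay geometrically, so
`g' x = lim Dₙ` is within a multiple of `S` of `D₀ = g (x + 1) - g x`, and `|D₀| ≤ 2 sup |g|`. -/

lemma iterDelta_two_apply {E : Type*} [Add E] (t : E) (g : E → ℝ) (y : E) :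
    iterDelta t 2 g y = g (y + t + t) - 2 * g (y + t) + g y := by
  simp only [iterDelta, Function.iterate_succ, Function.iterate_zero, Function.comp_apply, id_eq,
    deltaOp]
  ring

def dyadicSlope (g : ℝ → ℝ) (x : ℝ) (n : ℕ) : ℝ :=
  ((1 / 2 : ℝ) ^ n)⁻¹ * (g (x + (1 / 2) ^ n) - g x)

lemma dyadicSlope_zero (g : ℝ → ℝ) (x : ℝ) : dyadicSlope g x 0 = g (x + 1) - g x := by
  simp [dyadicSlope]

lemma dyadicSlope_sub_succ (g : ℝ → ℝ) (x : ℝ) (n : ℕ) :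
    dyadicSlope g x n - dyadicSlope g x (n + 1) =
      iterDelta ((1 / 2) ^ (n + 1)) 2 g x / (2 * (1 / 2) ^ (n + 1)) := by
  have hn : (1 / 2 : ℝ) ^ n = (1 / 2) ^ (n + 1) + (1 / 2) ^ (n + 1) := by ring
  rw [iterDelta_two_apply, dyadicSlope, dyadicSlope, hn, ← add_assoc]
  field_simp
  ring

lemma HasDerivAt.tendsto_dyadicSlope {g : ℝ → ℝ} {g' x : ℝ} (hd : HasDerivAt g g' x) :
    Tendsto (dyadicSlope g x) atTop (𝓝 g') :=
  hd.tendsto_slope_zero_right.comp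
    (tendsto_pow_atTop_nhdsWithin_zero_of_lt_one (by norm_num) (by norm_num))

section SecondDifferences

variable {g : ℝ → ℝ} {x α S : ℝ}

lemma dist_dyadicSlope_succ_le (hS : ∀ t ∈ Ioc (0 : ℝ) (1 / 2), |iterDelta t 2 g x| ≤ S * t ^ α)
    (n : ℕ) :
    dist (dyadicSlope g x n) (dyadicSlope g x (n + 1)) ≤
      S / 2 * (1 / 2) ^ (α - 1) * ((1 / 2 : ℝ) ^ (α - 1)) ^ n := by
  set t : ℝ := (1 / 2) ^ (n + 1)
  have ht : 0 < t := by positivity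
  have ht_le : t ≤ 1 / 2 := pow_le_of_le_one (by norm_num) (by norm_num) n.succ_ne_zero
  rw [Real.dist_eq, dyadicSlope_sub_succ, abs_div, abs_of_pos (by positivity : 0 < 2 * t),
    div_le_iff₀ (by positivity)]
  calc |iterDelta t 2 g x| ≤ S * t ^ α := hS t ⟨ht, ht_le⟩
    _ = S / 2 * t ^ (α - 1) * (2 * t) := by
      rw [Real.rpow_sub ht, Real.rpow_one]
      field_simp
    _ = S / 2 * (1 / 2) ^ (α - 1) * ((1 / 2 : ℝ) ^ (α - 1)) ^ n * (2 * t) := by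
      rw [← Real.rpow_pow_comm (by norm_num)]
      ring

lemma abs_sub_slope_le_of_abs_iterDelta_two_le (hα : 1 < α) {g' : ℝ} (hd : HasDerivAt g g' x)
    (hS : ∀ t ∈ Ioc (0 : ℝ) (1 / 2), |iterDelta t 2 g x| ≤ S * t ^ α) :
    |(g (x + 1) - g x) - g'| ≤
      S / 2 * (1 / 2) ^ (α - 1) / (1 - (1 / 2 : ℝ) ^ (α - 1)) := by
  have hr : (1 / 2 : ℝ) ^ (α - 1) < 1 := Real.rpow_lt_one (by norm_num) (by norm_num) (by linarith)
  have h := dist_le_of_le_geometric_of_tendsto₀ _ _ hr (dist_dyadicSlope_succ_le hS)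
    hd.tendsto_dyadicSlope
  rwa [Real.dist_eq, dyadicSlope_zero] at h

end SecondDifferences

lemma ENNReal.ofReal_le_mul_add_mul {a c : ℝ} {A B : ℝ≥0∞} (hc : 0 < c)
    (h : A ≠ ⊤ → B ≠ ⊤ → a ≤ c * A.toReal + c * B.toReal) :
    ENNReal.ofReal a ≤ ENNReal.ofReal c * A + ENNReal.ofReal c * B := by
  have hc' : ENNReal.ofReal c ≠ 0 := by simpa using hc
  rcases eq_or_ne A ⊤ with rfl | hA
  · simp [ENNReal.mul_top hc']
  rcases eq_or_ne B ⊤ with rfl | hB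
  · simp [ENNReal.mul_top hc']
  calc ENNReal.ofReal a ≤ ENNReal.ofReal (c * A.toReal + c * B.toReal) :=
        ENNReal.ofReal_le_ofReal (h hA hB)
    _ = ENNReal.ofReal c * A + ENNReal.ofReal c * B := by
      rw [ENNReal.ofReal_add (by positivity) (by positivity), ENNReal.ofReal_mul hc.le,
        ENNReal.ofReal_mul hc.le, ENNReal.ofReal_toReal hA, ENNReal.ofReal_toReal hB]

lemma abs_iterDelta_two_le_of_iSup_ne_top {g : ℝ → ℝ} {α : ℝ}
    (hB : (⨆ (t : ℝ) (_ : 0 < |t|) (_ : |t| ≤ 1 / 2) (y : ℝ) (_ : |y| ≤ 2),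
      ENNReal.ofReal (|iterDelta t 2 g y| / |t| ^ α)) ≠ ⊤)
    {t y : ℝ} (ht : 0 < |t|) (ht' : |t| ≤ 1 / 2) (hy : |y| ≤ 2) :
    |iterDelta t 2 g y| ≤
      (⨆ (t : ℝ) (_ : 0 < |t|) (_ : |t| ≤ 1 / 2) (y : ℝ) (_ : |y| ≤ 2),
        ENNReal.ofReal (|iterDelta t 2 g y| / |t| ^ α)).toReal * |t| ^ α := by
  rw [← div_le_iff₀ (by positivity), ← ENNReal.ofReal_le_iff_le_toReal hB]
  exact le_iSup_of_le t <| le_iSup_of_le ht <| le_iSup_of_le ht' <| le_iSup_of_le y <|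
    le_iSup_of_le hy le_rfl

/-- inequality (A.6) in the appendix: for `α ∈ (1,2)` there is `C > 0`
(depending only on `α`) such that for every bounded `C^2` function `g : (−3,3) → ℝ`,
`|g′(0)| ≤ C sup_{(−3,3)} |g| + C sup_{0<|t|≤1/2} sup_{|y|≤2} |Δ_t^2 g(y)|/|t|^α`. -/
theorem deriv_bound_by_second_differences (α : ℝ) (hα : α ∈ Set.Ioo (1 : ℝ) 2) :
    ∃ C : ℝ, 0 < C ∧ ∀ g : ℝ → ℝ,
      ContDiffOn ℝ 2 g (Set.Ioo (-3 : ℝ) 3) →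
      (∃ M, ∀ s ∈ Set.Ioo (-3 : ℝ) 3, |g s| ≤ M) →
      ENNReal.ofReal |deriv g 0| ≤
        ENNReal.ofReal C * (⨆ s ∈ Set.Ioo (-3 : ℝ) 3, ENNReal.ofReal |g s|) +
          ENNReal.ofReal C *
            ⨆ (t : ℝ) (_ : 0 < |t|) (_ : |t| ≤ 1 / 2) (y : ℝ) (_ : |y| ≤ 2),
              ENNReal.ofReal (|iterDelta t 2 g y| / |t| ^ α) := by
  set r : ℝ := (1 / 2 : ℝ) ^ (α - 1) with hr_def
  have hr : r < 1 := Real.rpow_lt_one (by norm_num) (by norm_num) (by linarith [hα.1])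
  have hK : 0 ≤ r / (1 - r) := div_nonneg (by positivity) (by linarith)
  refine ⟨2 + r / (1 - r), by linarith, fun g hg _ => ?_⟩
  refine ENNReal.ofReal_le_mul_add_mul (by linarith) fun hA hB => ?_
  set G := (⨆ s ∈ Ioo (-3 : ℝ) 3, ENNReal.ofReal |g s|).toReal
  set S := (⨆ (t : ℝ) (_ : 0 < |t|) (_ : |t| ≤ 1 / 2) (y : ℝ) (_ : |y| ≤ 2),
    ENNReal.ofReal (|iterDelta t 2 g y| / |t| ^ α)).toReal
  have hG : ∀ s ∈ Ioo (-3 : ℝ) 3, |g s| ≤ G := fun s hs =>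
    (ENNReal.ofReal_le_iff_le_toReal hA).1 <|
      le_iSup₂ (f := fun s (_ : s ∈ Ioo (-3 : ℝ) 3) => ENNReal.ofReal |g s|) s hs
  have hS : ∀ t ∈ Ioc (0 : ℝ) (1 / 2), |iterDelta t 2 g 0| ≤ S * t ^ α := fun t ⟨ht, ht'⟩ => by
    have := abs_iterDelta_two_le_of_iSup_ne_top hB (abs_pos_of_pos ht)
      ((abs_of_pos ht).trans_le ht') (abs_zero.trans_le zero_le_two)
    rwa [abs_of_pos ht] at this
  have hd : HasDerivAt g (deriv g 0) 0 :=
    ((hg.contDiffAt (Ioo_mem_nhds (by norm_num) (by norm_num))).differentiableAt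
      (by norm_num)).hasDerivAt
  have hD₀_near := abs_sub_slope_le_of_abs_iterDelta_two_le hα.1 hd hS
  rw [zero_add, ← hr_def, mul_div_assoc, abs_sub_comm] at hD₀_near
  have hD₀ : |g 1 - g 0| ≤ G + G :=
    (abs_sub _ _).trans (add_le_add (hG 1 (by norm_num)) (hG 0 (by norm_num)))
  have := abs_sub_abs_le_abs_sub (deriv g 0) (g 1 - g 0)
  have hS₀ : 0 ≤ S := toReal_nonneg
  nlinarith [mul_nonneg hK (toReal_nonneg : 0 ≤ G), mul_nonneg hK hS₀]

end
end

section
/- Let d ≥ 1 and let (μ_t)_{t ∈ (0,1]} be a family of Borel probability measures on ℝ^d such that for every δ > 0, μ_t({y : |y| > δ}) → 0 as t → 0, and such that each μ_t is absolutely continuous with respect to Lebesgue measure. Let U ⊆ ℝ^d be open, and let f : ℝ^d → ℝ be bounded and Borel measurable with lim_{t→0} ∫_{ℝ^d} f(x+y) μ_t(dy) = f(x) for every x ∈ U. If f̃ : U → ℝ is bounded and continuous and f = f̃ Lebesgue-almost everywhere on U, then f(x) = f̃(x) for every x ∈ U; in particular, the restriction of f to U is continuous. -/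
open MeasureTheory ENNReal Metric Set Filter Topology

noncomputable section

/-! Let `g` be `f̃` on `U` and `f` elsewhere, so `f = g` Lebesgue-a.e. Since `μ_t ≪ Lebesgue` and
Lebesgue measure is translation invariant, `∫ f(x+y) μ_t(dy) = ∫ g(x+y) μ_t(dy)`. For `x ∈ U` the
bounded function `y ↦ g(x+y)` is continuous at `0` and `μ_t` concentrates at `0`, so these integrals
tend to `g(x) = f̃(x)`; they also tend to `f(x)`, and limits are unique. -/

namespace MeasureTheory.Measure.AbsolutelyContinuous

theorem ae_eq_comp_add_left {G β : Type*} [MeasurableSpace G] [Add G] [MeasurableAdd G]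
    {μ ν : Measure G} [ν.IsAddLeftInvariant] (hμ : μ ≪ ν) {f g : G → β} (hfg : f =ᵐ[ν] g)
    (x : G) : (fun y => f (x + y)) =ᵐ[μ] fun y => g (x + y) :=
  hμ.ae_le ((measurePreserving_add_left ν x).quasiMeasurePreserving.ae_eq hfg)

end MeasureTheory.Measure.AbsolutelyContinuous

theorem ae_eq_piecewise_of_ae_eq_restrict {α β : Type*} [MeasurableSpace α] {ν : Measure α}
    {s : Set α} [DecidablePred (· ∈ s)] (hs : MeasurableSet s) {f g : α → β}
    (hfg : f =ᵐ[ν.restrict s] g) : f =ᵐ[ν] s.piecewise g f := by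
  filter_upwards [(ae_restrict_iff' hs).mp hfg] with x hx
  by_cases hxs : x ∈ s
  · simp [hxs, hx hxs]
  · simp [hxs]

theorem tendsto_integral_of_continuousAt_zero {ι E : Type*} {l : Filter ι} [NormedAddCommGroup E]
    [MeasurableSpace E] [OpensMeasurableSpace E] {μ : ι → Measure E}
    (hprob : ∀ᶠ i in l, IsProbabilityMeasure (μ i))
    (hconc : ∀ δ : ℝ, 0 < δ → Tendsto (fun i => μ i {y | δ < ‖y‖}) l (𝓝 0))
    {g : E → ℝ} {C : ℝ} (hC : ∀ y, |g y| ≤ C) (hgm : ∀ᶠ i in l, AEStronglyMeasurable g (μ i))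
    (hg0 : ContinuousAt g 0) : Tendsto (fun i => ∫ y, g y ∂μ i) l (𝓝 (g 0)) := by
  rw [Metric.tendsto_nhds]
  intro ε hε
  obtain ⟨δ, hδ, hnear⟩ := Metric.continuousAt_iff.mp hg0 (ε / 2) (half_pos hε)
  set s : Set E := {y | δ / 2 < ‖y‖}
  have hs : MeasurableSet s := measurableSet_lt measurable_const measurable_norm
  have hpoint : ∀ y, |g y - g 0| ≤ ε / 2 + s.indicator (fun _ => 2 * C) y := by
    intro y
    by_cases hy : y ∈ s
    · simp only [Set.indicator_of_mem hy]
      linarith [abs_sub (g y) (g 0), hC y, hC 0]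
    · have hyδ : dist y 0 < δ := by
        rw [dist_zero_right]
        exact (not_lt.mp hy).trans_lt (half_lt_self hδ)
      simp only [Set.indicator_of_notMem hy, add_zero]
      exact (hnear hyδ).le
  have hlim : Tendsto (fun i => ε / 2 + 2 * C * (μ i s).toReal) l (𝓝 (ε / 2 + 2 * C * 0)) :=
    tendsto_const_nhds.add
      (((ENNReal.tendsto_toReal zero_ne_top).comp (hconc _ (half_pos hδ))).const_mul _)
  filter_upwards [hprob, hgm, hlim.eventually_lt_const (show ε / 2 + 2 * C * 0 < ε by linarith)]
    with i hi hgi hsmall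
  have hgint : Integrable g (μ i) :=
    Integrable.of_bound hgi C (ae_of_all _ fun y => (Real.norm_eq_abs _).trans_le (hC y))
  have hdom : Integrable (fun y => ε / 2 + s.indicator (fun _ => 2 * C) y) (μ i) :=
    (integrable_const _).add ((integrable_const _).indicator hs)
  calc dist (∫ y, g y ∂μ i) (g 0) = |∫ y, (g y - g 0) ∂μ i| := by
        rw [Real.dist_eq, integral_sub hgint (integrable_const _)]
        simp
    _ ≤ ∫ y, |g y - g 0| ∂μ i := abs_integral_le_integral_abs
    _ ≤ ∫ y, (ε / 2 + s.indicator (fun _ => 2 * C) y) ∂μ i :=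
        integral_mono_of_nonneg (ae_of_all _ fun _ => abs_nonneg _) hdom (ae_of_all _ hpoint)
    _ = ε / 2 + 2 * C * (μ i s).toReal := by
        rw [integral_add (integrable_const _) ((integrable_const _).indicator hs),
          integral_const, integral_indicator_const _ hs]
        simp [Measure.real, mul_comm]
    _ < ε := hsmall

theorem ae_modification_is_everywhere_general {d : ℕ}
    (μ : ℝ → Measure (Ed d))
    (hprob : ∀ t ∈ Set.Ioc (0 : ℝ) 1, IsProbabilityMeasure (μ t))
    (htight : ∀ δ : ℝ, 0 < δ →
      Filter.Tendsto (fun t => μ t {y : Ed d | δ < ‖y‖}) (𝓝[>] (0 : ℝ)) (𝓝 0))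
    (hac : ∀ t ∈ Set.Ioc (0 : ℝ) 1, μ t ≪ volume)
    (U : Set (Ed d)) (hU : IsOpen U)
    (f : Ed d → ℝ) (hfm : Measurable f) (hfb : ∃ M, ∀ x, |f x| ≤ M)
    (hconv : ∀ x ∈ U,
      Filter.Tendsto (fun t => ∫ y, f (x + y) ∂(μ t)) (𝓝[>] (0 : ℝ)) (𝓝 (f x)))
    (ftilde : Ed d → ℝ) (hcont : ContinuousOn ftilde U)
    (hbdd : ∃ M, ∀ x ∈ U, |ftilde x| ≤ M)
    (hae : ∀ᵐ x ∂(volume.restrict U), f x = ftilde x) :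
    (∀ x ∈ U, f x = ftilde x) ∧ ContinuousOn f U := by
  classical
  obtain ⟨M, hM⟩ := hfb
  obtain ⟨M', hM'⟩ := hbdd
  have hIoc : ∀ᶠ t in 𝓝[>] (0 : ℝ), t ∈ Set.Ioc (0 : ℝ) 1 :=
    Ioc_mem_nhdsGT_of_mem ⟨le_rfl, zero_lt_one⟩
  set g := U.piecewise ftilde f
  have hfg : f =ᵐ[volume] g := ae_eq_piecewise_of_ae_eq_restrict hU.measurableSet hae
  have hg_bound : ∀ z, |g z| ≤ max M' M := by
    intro z
    by_cases hz : z ∈ U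
    · simpa [g, hz] using le_max_of_le_left (hM' z hz)
    · simpa [g, hz] using le_max_of_le_right (hM z)
  have key : ∀ x ∈ U, f x = ftilde x := by
    intro x hx
    have hshift : ∀ᶠ t in 𝓝[>] (0 : ℝ), (fun y => f (x + y)) =ᵐ[μ t] fun y => g (x + y) :=
      hIoc.mono fun t ht => (hac t ht).ae_eq_comp_add_left hfg x
    have hg_cont : ContinuousAt (fun y => g (x + y)) 0 := by
      have : ContinuousAt g (x + 0) := by
        rw [add_zero]
        exact (hcont.continuousAt (hU.mem_nhds hx)).congr
          (mem_of_superset (hU.mem_nhds hx) fun z hz => (U.piecewise_eq_of_mem _ _ hz).symm)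
      exact this.comp (continuous_const_add x).continuousAt
    have hlim := tendsto_integral_of_continuousAt_zero (hIoc.mono fun t ht => hprob t ht) htight
      (fun y => hg_bound (x + y))
      (hshift.mono fun t ht => ((hfm.comp (measurable_const_add x)).aestronglyMeasurable.congr ht))
      hg_cont
    have hlim' := (hconv x hx).congr' (hshift.mono fun t ht => integral_congr_ae ht)
    simpa [g, hx] using tendsto_nhds_unique hlim' hlim
  exact ⟨key, hcont.congr key⟩

/-- Lemma 3.5, measure-theoretic form: if `(μ_t)_{t ∈ (0,1]}` are absolutely
continuous probability measures with `μ_t({|y| > δ}) → 0` as `t → 0`, `f` is bounded measurable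
with `∫ f(x+y) μ_t(dy) → f(x)` for all `x ∈ U`, and `f̃` is bounded continuous on `U` with
`f = f̃` a.e. on `U`, then `f = f̃` everywhere on `U`; in particular `f` is continuous on `U`. -/
theorem ae_modification_is_everywhere {d : ℕ} (hd : 1 ≤ d)
    (μ : ℝ → Measure (Ed d))
    (hprob : ∀ t ∈ Set.Ioc (0 : ℝ) 1, IsProbabilityMeasure (μ t))
    (htight : ∀ δ : ℝ, 0 < δ →
      Filter.Tendsto (fun t => μ t {y : Ed d | δ < ‖y‖}) (𝓝[>] (0 : ℝ)) (𝓝 0))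
    (hac : ∀ t ∈ Set.Ioc (0 : ℝ) 1, μ t ≪ volume)
    (U : Set (Ed d)) (hU : IsOpen U)
    (f : Ed d → ℝ) (hfm : Measurable f) (hfb : ∃ M, ∀ x, |f x| ≤ M)
    (hconv : ∀ x ∈ U,
      Filter.Tendsto (fun t => ∫ y, f (x + y) ∂(μ t)) (𝓝[>] (0 : ℝ)) (𝓝 (f x)))
    (ftilde : Ed d → ℝ) (hcont : ContinuousOn ftilde U)
    (hbdd : ∃ M, ∀ x ∈ U, |ftilde x| ≤ M)
    (hae : ∀ᵐ x ∂(volume.restrict U), f x = ftilde x) :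
    (∀ x ∈ U, f x = ftilde x) ∧ ContinuousOn f U :=
  ae_modification_is_everywhere_general μ hprob htight hac U hU f hfm hfb hconv ftilde hcont hbdd
    hae

end
end
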